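/- Let q be an odd positive integer and let p, j be integers. Then Σ_{ℓ odd, −q ≤ ℓ ≤ q−1} ζ_{2q}^{jℓ − pℓ³} = (−1)^{j+p} · Σ_{ν=0}^{q−1} ζ_q^{jν − 4pν³}, where the left-hand sum extends over the odd integers ℓ in the interval [−q, q−1]. -/
import Mathlib

/-- ζ_m = exp(2πi/m), the primitive m-th root of unity. -/
noncomputable def zeta (m : ℕ) : ℂ := Complex.exp (2 * Real.pi * Complex.I / (m : ℂ))

lemma zeta_ne_zero (m : ℕ) : zeta m ≠ 0 := Complex.exp_ne_zero _

lemma zeta_zpow (m : ℕ) (n : ℤ) :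
    zeta m ^ n = Complex.exp (n * (2 * Real.pi * Complex.I / (m : ℂ))) := by
  rw [zeta, ← Complex.exp_int_mul]

lemma zeta_two_mul_sq (q : ℕ) (hq : 0 < q) : zeta (2*q) ^ (2:ℤ) = zeta q := by
  rw [zeta_zpow, zeta]
  congr 1
  have h : (q:ℂ) ≠ 0 := Nat.cast_ne_zero.2 hq.ne'
  push_cast
  field_simp

lemma zeta_two_mul_pow_q (q : ℕ) (hq : 0 < q) : zeta (2*q) ^ (q:ℤ) = -1 := by
  rw [zeta_zpow]
  have h : (q:ℂ) ≠ 0 := Nat.cast_ne_zero.2 hq.ne'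
  have e : ((q:ℤ):ℂ) * (2 * Real.pi * Complex.I / ((2*q : ℕ) : ℂ)) = Real.pi * Complex.I := by
    push_cast; field_simp
  rw [e, Complex.exp_pi_mul_I]

lemma term_eq (q : ℕ) (hq : 0 < q) (hodd : Odd q) (p j ν : ℤ) :
    zeta (2*q) ^ (j * (2*ν - q) - p * (2*ν - q)^3) =
    (-1:ℂ)^(j+p) * zeta q ^ (j*ν - 4*p*ν^3) := by
  obtain ⟨k, hk⟩ := hodd
  have hkz : (q:ℤ) = 2*(k:ℤ)+1 := by exact_mod_cast hk
  have hz := zeta_ne_zero (2*q)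
  have he : j * (2*ν - (q:ℤ)) - p * (2*ν - q)^3 =
      2 * (j*ν - 4*p*ν^3) +
      (q:ℤ) * ((j+p) + 2*(-j + 6*p*ν^2 - 3*p*ν*q + p*(2*(k:ℤ)^2+2*k))) := by
    rw [hkz]; ring
  rw [he, zpow_add₀ hz, zpow_mul, zpow_mul, zeta_two_mul_sq q hq, zeta_two_mul_pow_q q hq,
    zpow_add₀ (by norm_num : (-1:ℂ) ≠ 0), zpow_mul]
  norm_num
  ring

/-- For q odd and integers p, j,
Σ_{ℓ odd, −q ≤ ℓ ≤ q−1} ζ_{2q}^{jℓ − pℓ³} = (−1)^{j+p} · Σ_{ν=0}^{q−1} ζ_q^{jν − 4pν³}. -/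
theorem odd_q_sum_reduction (q : ℕ) (hq : 0 < q) (hodd : Odd q) (p j : ℤ) :
    ∑ ℓ ∈ (Finset.Icc (-(q : ℤ)) ((q : ℤ) - 1)).filter (fun ℓ => Odd ℓ),
        zeta (2 * q) ^ (j * ℓ - p * ℓ ^ 3) =
    (-1 : ℂ) ^ (j + p) *
      ∑ ν ∈ Finset.range q, zeta q ^ (j * (ν : ℤ) - 4 * p * (ν : ℤ) ^ 3) := by
  rw [Finset.mul_sum]
  obtain ⟨k, hk⟩ := hodd
  have hkz : (q:ℤ) = 2*(k:ℤ)+1 := by exact_mod_cast hk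
  refine Finset.sum_nbij' (fun ℓ => ((ℓ + q)/2).toNat) (fun ν => 2*(ν:ℤ) - q) ?_ ?_ ?_ ?_ ?_
  · intro ℓ hℓ
    simp only [Finset.mem_filter, Finset.mem_Icc] at hℓ
    obtain ⟨⟨h1, h2⟩, h3⟩ := hℓ
    simp only [Finset.mem_range]
    have h2' : ℓ ≤ (q:ℤ) - 2 := by
      rcases h3 with ⟨t, ht⟩
      omega
    omega
  · intro ν hν
    simp only [Finset.mem_range] at hν
    simp only [Finset.mem_filter, Finset.mem_Icc]
    refine ⟨⟨by omega, by omega⟩, ⟨(ν:ℤ) - k - 1, by omega⟩⟩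
  · intro ℓ hℓ
    simp only [Finset.mem_filter, Finset.mem_Icc] at hℓ
    obtain ⟨⟨h1, h2⟩, ⟨t, ht⟩⟩ := hℓ
    beta_reduce
    omega
  · intro ν hν
    simp only [Finset.mem_range] at hν
    beta_reduce
    omega
  · intro ℓ hℓ
    simp only [Finset.mem_filter, Finset.mem_Icc] at hℓ
    obtain ⟨⟨h1, h2⟩, ⟨t, ht⟩⟩ := hℓ
    have hcast : (((ℓ + q)/2).toNat : ℤ) = (ℓ + q)/2 := by omega
    have hℓeq : 2 * ((((ℓ + q)/2).toNat : ℤ)) - q = ℓ := by omega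
    rw [hcast] at hℓeq ⊢
    calc zeta (2*q) ^ (j * ℓ - p * ℓ ^ 3)
        = zeta (2*q) ^ (j * (2*((ℓ+q)/2) - q) - p * (2*((ℓ+q)/2) - q) ^ 3) := by rw [hℓeq]
      _ = (-1:ℂ)^(j+p) * zeta q ^ (j*((ℓ+q)/2) - 4*p*((ℓ+q)/2)^3) :=
          term_eq q hq ⟨k, hk⟩ p j _
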